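/- arXiv:2012.01767 — 10 statements merged into one kernel-verified Lean document; each statement's English description precedes it below -/
import Mathlib

section
/- Let v, w ∈ ℝ with 0 ≤ w ≤ v, and let g : ℝ → ℝ be a nonnegative measurable function that is integrable on [0, ∞) with ∫₀^∞ g(t) dt = 1. For b ≥ 0 define the expected second-price payoff π(b) := ∫₀^b (v − t)·g(t) dt + w·∫_b^∞ g(t) dt. Then the bid b* := v − w satisfies π(b*) ≥ π(b) for every b ≥ 0; that is, bidding the marginal value v − w is weakly dominant in a second-price auction regardless of the competition density g. -/
open MeasureTheory

/-- **Myopic optimality of the marginal bid (Proposition 1, sufficiency).**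
Let `0 ≤ w ≤ v` and let `g` be a nonnegative measurable density of the highest
competing bid, integrable on `[0, ∞)` with total mass `1`.  For `b ≥ 0` the expected
second-price payoff is `π(b) = ∫₀^b (v − t)·g(t) dt + w·∫_b^∞ g(t) dt`.  Then the bid
`b* = v − w` satisfies `π(b*) ≥ π(b)` for every `b ≥ 0`. -/
theorem marginal_bid_is_myopic_optimal
    (v w : ℝ) (hw : 0 ≤ w) (hwv : w ≤ v)
    (g : ℝ → ℝ) (hg_meas : Measurable g) (hg_nonneg : ∀ t, 0 ≤ g t)
    (hg_int : IntegrableOn g (Set.Ici (0 : ℝ)))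
    (hg_mass : ∫ t in Set.Ici (0 : ℝ), g t = 1)
    (π : ℝ → ℝ)
    (hπ : ∀ b, 0 ≤ b →
      π b = (∫ t in (0 : ℝ)..b, (v - t) * g t) + w * ∫ t in Set.Ioi b, g t) :
    ∀ b, 0 ≤ b → π b ≤ π (v - w) := by
  intro b hb
  set c := v - w with hc
  have hc0 : 0 ≤ c := sub_nonneg.2 hwv
  -- interval integrability of g on nonnegative intervals
  have hgi : ∀ a b' : ℝ, 0 ≤ a → 0 ≤ b' → IntervalIntegrable g volume a b' := by
    intro a b' ha hb'
    refine (hg_int.mono_set ?_).intervalIntegrable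
    intro x hx
    rcases Set.mem_uIcc.mp hx with ⟨h1, _⟩ | ⟨h1, _⟩
    · exact le_trans ha h1
    · exact le_trans hb' h1
  have hfi : ∀ a b' : ℝ, 0 ≤ a → 0 ≤ b' →
      IntervalIntegrable (fun t => (v - t) * g t) volume a b' := by
    intro a b' ha hb'
    exact (hgi a b' ha hb').continuousOn_mul (by fun_prop)
  -- tail decomposition
  have tail : ∀ a b' : ℝ, 0 ≤ a → a ≤ b' →
      (∫ t in Set.Ioi a, g t) = (∫ t in a..b', g t) + ∫ t in Set.Ioi b', g t := by
    intro a b' ha hab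
    rw [intervalIntegral.integral_of_le hab,
      ← setIntegral_union (Set.Ioc_disjoint_Ioi le_rfl) measurableSet_Ioi
        (hg_int.mono_set (Set.Ioc_subset_Icc_self.trans (Set.Icc_subset_Ici_self.trans
          (Set.Ici_subset_Ici.mpr ha))))
        (hg_int.mono_set (Set.Ioi_subset_Ici_self.trans
          (Set.Ici_subset_Ici.mpr (ha.trans hab)))),
      Set.Ioc_union_Ioi_eq_Ioi hab]
  -- difference formula for x ≤ y, both nonneg
  have diff : ∀ x y : ℝ, 0 ≤ x → x ≤ y →
      ((∫ t in (0:ℝ)..y, (v - t) * g t) + w * ∫ t in Set.Ioi y, g t)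
      - ((∫ t in (0:ℝ)..x, (v - t) * g t) + w * ∫ t in Set.Ioi x, g t)
      = ∫ t in x..y, (c - t) * g t := by
    intro x y hx hxy
    have hy : 0 ≤ y := hx.trans hxy
    have hsplit : (∫ t in (0:ℝ)..x, (v - t) * g t) + ∫ t in x..y, (v - t) * g t
        = ∫ t in (0:ℝ)..y, (v - t) * g t :=
      intervalIntegral.integral_add_adjacent_intervals (hfi 0 x le_rfl hx) (hfi x y hx hy)
    have htail := tail x y hx hxy
    have : ∫ t in x..y, (c - t) * g t
        = (∫ t in x..y, (v - t) * g t) - w * ∫ t in x..y, g t := by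
      rw [← intervalIntegral.integral_const_mul,
        ← intervalIntegral.integral_sub (hfi x y hx hy)
          ((hgi x y hx hy).const_mul w)]
      congr 1
      ext t
      rw [hc]
      ring_nf
    rw [this, ← hsplit, htail]
    ring
  rw [hπ b hb, hπ c hc0]
  rcases le_total b c with h | h
  · have := diff b c hb h
    have hnn : 0 ≤ ∫ t in b..c, (c - t) * g t := by
      apply intervalIntegral.integral_nonneg h
      intro u hu
      exact mul_nonneg (sub_nonneg.2 hu.2) (hg_nonneg u)
    linarith
  · have := diff c b hc0 h
    have hnn : 0 ≤ ∫ t in c..b, (t - c) * g t :=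
      intervalIntegral.integral_nonneg h fun u hu =>
        mul_nonneg (sub_nonneg.2 hu.1) (hg_nonneg u)
    have hnp : (∫ t in c..b, (c - t) * g t) ≤ 0 := by
      have heq : (fun t => (c - t) * g t) = fun t => -((t - c) * g t) := by
        ext t; ring
      rw [heq, intervalIntegral.integral_neg]
      linarith
    linarith
end

section
/- Let v, w ∈ ℝ with 0 ≤ w ≤ v and let b ≥ 0. Suppose that for every continuous, strictly positive function g : [0, ∞) → ℝ that is integrable with ∫₀^∞ g(t) dt = 1, the bid b maximizes the expected second-price payoff π_g(b') := ∫₀^{b'} (v − t)·g(t) dt + w·∫_{b'}^∞ g(t) dt over b' ∈ [0, ∞). Then b = v − w. Hence the marginal bid v − w is the unique bid that is weakly dominant for every competition profile. -/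
open MeasureTheory

/-- **Uniqueness of the weakly dominant bid (Proposition 1, necessity).**
Let `0 ≤ w ≤ v` and `b ≥ 0`.  If for every continuous, strictly positive density
`g` on `[0, ∞)` that is integrable with total mass `1`, the bid `b` maximizes the
expected second-price payoff `π_g(b') = ∫₀^{b'} (v − t)·g(t) dt + w·∫_{b'}^∞ g(t) dt`
over all `b' ≥ 0`, then `b = v − w`. -/
theorem marginal_bid_unique_weakly_dominant
    (v w : ℝ) (hw : 0 ≤ w) (hwv : w ≤ v)
    (b : ℝ) (hb : 0 ≤ b)
    (hopt : ∀ g : ℝ → ℝ,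
      ContinuousOn g (Set.Ici (0 : ℝ)) →
      (∀ t ∈ Set.Ici (0 : ℝ), 0 < g t) →
      IntegrableOn g (Set.Ici (0 : ℝ)) →
      (∫ t in Set.Ici (0 : ℝ), g t = 1) →
      ∀ b', 0 ≤ b' →
        (∫ t in (0 : ℝ)..b', (v - t) * g t) + w * (∫ t in Set.Ioi b', g t) ≤
          (∫ t in (0 : ℝ)..b, (v - t) * g t) + w * (∫ t in Set.Ioi b, g t)) :
    b = v - w := by
  set m : ℝ := v - w with hm
  have hm0 : 0 ≤ m := by simp [hm]; linarith
  -- use the exponential density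
  have hIoi : IntegrableOn (fun t : ℝ => Real.exp (-t)) (Set.Ioi (0 : ℝ)) := by
    simpa using exp_neg_integrableOn_Ioi (0 : ℝ) (b := 1) one_pos
  have hInt : IntegrableOn (fun t : ℝ => Real.exp (-t)) (Set.Ici (0 : ℝ)) := by
    rwa [integrableOn_Ici_iff_integrableOn_Ioi]
  have hMass : (∫ t in Set.Ici (0 : ℝ), Real.exp (-t)) = 1 := by
    rw [integral_Ici_eq_integral_Ioi]
    exact integral_exp_neg_Ioi_zero
  have key := hopt (fun t => Real.exp (-t))
    (Real.continuous_exp.comp continuous_neg).continuousOn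
    (fun t _ => Real.exp_pos _) hInt hMass m hm0
  -- rewrite the tail integrals
  have htail : ∀ c : ℝ, (∫ t in Set.Ioi c, Real.exp (-t)) = Real.exp (-c) :=
    fun c => integral_exp_neg_Ioi c
  rw [htail, htail] at key
  -- interval integrability of the integrand
  have hcont : Continuous (fun t : ℝ => (v - t) * Real.exp (-t)) := by
    fun_prop
  have hii : ∀ a c : ℝ, IntervalIntegrable (fun t : ℝ => (v - t) * Real.exp (-t)) volume a c :=
    fun a c => hcont.intervalIntegrable a c
  -- π(m) ≤ π(b)  becomes  ∫_b^m (v-t)e^{-t} ≤ w * (e^{-b} - e^{-m})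
  have hsub : (∫ t in (0:ℝ)..m, (v - t) * Real.exp (-t)) -
      (∫ t in (0:ℝ)..b, (v - t) * Real.exp (-t)) =
      ∫ t in b..m, (v - t) * Real.exp (-t) :=
    intervalIntegral.integral_interval_sub_left (hii 0 m) (hii 0 b)
  have hexp : (∫ t in b..m, Real.exp (-t)) = Real.exp (-b) - Real.exp (-m) := by
    rw [intervalIntegral.integral_comp_neg (fun t => Real.exp t)]
    simp [Real.exp_neg]
  have hdiff : (∫ t in b..m, (m - t) * Real.exp (-t)) ≤ 0 := by
    have h1 : (∫ t in b..m, (v - t) * Real.exp (-t)) ≤ w * (Real.exp (-b) - Real.exp (-m)) := by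
      rw [← hsub]; linarith [key]
    have h2 : (∫ t in b..m, (m - t) * Real.exp (-t)) =
        (∫ t in b..m, (v - t) * Real.exp (-t)) - w * (∫ t in b..m, Real.exp (-t)) := by
      have hE : IntervalIntegrable (fun t : ℝ => w * Real.exp (-t)) volume b m :=
        (by fun_prop : Continuous (fun t : ℝ => w * Real.exp (-t))).intervalIntegrable b m
      rw [← intervalIntegral.integral_const_mul, ← intervalIntegral.integral_sub (hii b m) hE]
      congr 1; ext t; simp only [hm]; ring
    rw [h2, hexp]; linarith
  -- but if b ≠ m this integral is strictly positive
  by_contra hne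
  have hiiP : ∀ a c : ℝ, IntervalIntegrable (fun t : ℝ => (m - t) * Real.exp (-t)) volume a c :=
    fun a c => (by fun_prop : Continuous (fun t : ℝ => (m - t) * Real.exp (-t))).intervalIntegrable a c
  rcases lt_or_gt_of_ne hne with h | h
  · -- b < m : integrand positive on (b, m)
    have hpos : 0 < ∫ t in b..m, (m - t) * Real.exp (-t) := by
      apply intervalIntegral.intervalIntegral_pos_of_pos_on (hiiP b m)
      · intro x hx
        exact mul_pos (by linarith [hx.2]) (Real.exp_pos _)
      · exact h
    linarith
  · -- b > m : ∫_b^m = -∫_m^b, and ∫_m^b of (t-m)e^{-t} positive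
    have hpos : 0 < ∫ t in m..b, (t - m) * Real.exp (-t) := by
      apply intervalIntegral.intervalIntegral_pos_of_pos_on
        ((by fun_prop : Continuous (fun t : ℝ => (t - m) * Real.exp (-t))).intervalIntegrable m b)
      · intro x hx
        exact mul_pos (by linarith [hx.1]) (Real.exp_pos _)
      · exact h
    have : (∫ t in b..m, (m - t) * Real.exp (-t)) = ∫ t in m..b, (t - m) * Real.exp (-t) := by
      rw [intervalIntegral.integral_symm]
      rw [← intervalIntegral.integral_neg]
      congr 1; ext t; ring
    linarith [this ▸ hpos]
end

section
/- Let V : 𝕊 → ℝ be a monotone reward function with V(s) > 0 for every s ∈ 𝕊, and let ν : 𝕊 → ℝ be a valuation. Then ν is additive for V (i.e. ν(s) = V(s) − V(s^-) for all s ∈ 𝕊) if and only if there exists an internal attribution μ for V such that ν_P^μ(s) = ν(s) for every full-support probability P on 𝕊 and every s ∈ 𝕊. (Distributional robustness characterization of the core valuation.) -/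
open Finset

namespace CoreAttr

variable (A : Type) [Fintype A] [DecidableEq A]

def listsLe : ℕ → Finset (List A)
  | 0 => {[]}
  | n + 1 => {[]} ∪ (Finset.univ ×ˢ listsLe n).image fun p : A × List A => p.1 :: p.2

theorem mem_listsLe (n : ℕ) (l : List A) : l ∈ listsLe A n ↔ l.length ≤ n := by
  induction n generalizing l with
  | zero => simp [listsLe, Nat.le_zero, List.length_eq_zero_iff]
  | succ n ih =>
    cases l with
    | nil => simp [listsLe]
    | cons a t => simp [listsLe, ih, Nat.succ_le_succ_iff]

/-- The set of scenarios: nonempty lists of actions of length at most `L`. -/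
def scenarios (L : ℕ) : Finset (List A) := (listsLe A L).filter fun s => s ≠ []

theorem mem_scenarios (L : ℕ) (l : List A) :
    l ∈ scenarios A L ↔ l ≠ [] ∧ l.length ≤ L := by
  simp [scenarios, mem_listsLe, and_comm]

variable {A}

/-- `P` is a probability on the finite set `𝕊`. -/
def IsProb (𝕊 : Finset (List A)) (P : List A → ℝ) : Prop :=
  (∀ s ∈ 𝕊, 0 ≤ P s) ∧ ∑ s ∈ 𝕊, P s = 1

def FullSupport (𝕊 : Finset (List A)) (P : List A → ℝ) : Prop :=
  ∀ s ∈ 𝕊, 0 < P s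

/-- `μ` is an internal attribution for the reward `V`. -/
def IsInternalAttr (𝕊 : Finset (List A)) (V : List A → ℝ) (μ : ℕ → List A → ℝ) : Prop :=
  (∀ i : ℕ, ∀ s ∈ 𝕊, 0 ≤ μ i s) ∧
  (∀ i : ℕ, ∀ s ∈ 𝕊, ¬(1 ≤ i ∧ i ≤ s.length) → μ i s = 0) ∧
  (∀ s ∈ 𝕊, ∑ i ∈ Finset.Icc 1 s.length, μ i s = V s)

/-- The valuation associated with attribution `μ` under probability `P`:
`ν_P^μ(s) = E_{S∼P}[μ(ℓ(s), S) | S ≽ s]`. -/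
noncomputable def assocVal (𝕊 : Finset (List A)) (P : List A → ℝ) (μ : ℕ → List A → ℝ)
    (s : List A) : ℝ :=
  (∑ s' ∈ 𝕊.filter (fun s' => s <+: s'), P s' * μ s.length s') /
    (∑ s' ∈ 𝕊.filter (fun s' => s <+: s'), P s')

/-- `Σ_{j=1}^{ℓ(s)} ν(s^j)`. -/
noncomputable def sumPrefix (ν : List A → ℝ) (s : List A) : ℝ :=
  ∑ j ∈ Finset.Icc 1 s.length, ν (s.take j)

/-- The fixed-point attribution `μ_ν`. -/
noncomputable def muFP (V ν : List A → ℝ) (i : ℕ) (s : List A) : ℝ :=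
  if 1 ≤ i ∧ i ≤ s.length then ν (s.take i) * V s / sumPrefix ν s else 0

/-- The MM objective `f`. -/
noncomputable def fObj (𝕊 : Finset (List A)) (P V ν : List A → ℝ) : ℝ :=
  ∑ s ∈ 𝕊, P s * (V s * Real.log (sumPrefix ν s) - sumPrefix ν s)

/-- The MM surrogate `g(ν | ν̂)`. -/
noncomputable def gSurr (𝕊 : Finset (List A)) (P V ν νh : List A → ℝ) : ℝ :=
  ∑ s ∈ 𝕊, P s * ∑ j ∈ Finset.Icc 1 s.length,
    (νh (s.take j) * V s / sumPrefix νh s *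
        Real.log (ν (s.take j) / νh (s.take j) * sumPrefix νh s) -
      ν (s.take j))


lemma take_mem_scenarios {L : ℕ} {s : List A} (hs : s ∈ scenarios A L) {i : ℕ} (h1 : 1 ≤ i) :
    s.take i ∈ scenarios A L := by
  rw [mem_scenarios] at hs ⊢
  obtain ⟨hne, hlen⟩ := hs
  have hsl : 0 < s.length := List.length_pos_iff.mpr hne
  constructor
  · apply List.length_pos_iff.mp
    rw [List.length_take]; omega
  · rw [List.length_take]; omega

lemma sum_Icc_sub (F : ℕ → ℝ) (n : ℕ) :
    ∑ i ∈ Finset.Icc 1 n, (F i - F (i-1)) = F n - F 0 := by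
  induction n with
  | zero => simp
  | succ n ih =>
    rw [Finset.sum_Icc_succ_top (by omega : 1 ≤ n+1), ih]
    simp

/-- **Distributional robustness characterization of the core valuation (Prop. 2).**
A valuation `ν` is additive for `V` iff there is an internal attribution `μ` whose
associated valuation equals `ν` under every full-support probability `P`. -/
theorem additive_iff_distributionally_robust
    {A : Type} [Fintype A] [DecidableEq A] [Nonempty A] (L : ℕ) (hL : 1 ≤ L)
    (V : List A → ℝ) (hV0 : V [] = 0)
    (hmono : ∀ s ∈ scenarios A L, ∀ s' ∈ scenarios A L, s <+: s' → V s ≤ V s')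
    (hVpos : ∀ s ∈ scenarios A L, 0 < V s)
    (ν : List A → ℝ) :
    (∀ s ∈ scenarios A L, ν s = V s - V s.dropLast) ↔
      ∃ μ : ℕ → List A → ℝ, IsInternalAttr (scenarios A L) V μ ∧
        ∀ P : List A → ℝ, IsProb (scenarios A L) P → FullSupport (scenarios A L) P →
          ∀ s ∈ scenarios A L, assocVal (scenarios A L) P μ s = ν s := by
  constructor
  · intro hadd
    refine ⟨fun i s' => if 1 ≤ i ∧ i ≤ s'.length then V (s'.take i) - V (s'.take (i-1)) else 0,
      ⟨?_, ?_, ?_⟩, ?_⟩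
    · intro i s' hs'
      dsimp only
      split_ifs with h
      · obtain ⟨hi1, hi2⟩ := h
        rcases Nat.lt_or_ge i 2 with hi | hi
        · have hi1' : i = 1 := by omega
          subst hi1'
          simp only [Nat.sub_self, List.take_zero, hV0]
          have := hVpos _ (take_mem_scenarios hs' le_rfl)
          linarith
        · have h1' : s'.take (i-1) ∈ scenarios A L := take_mem_scenarios hs' (by omega)
          have h2' : s'.take i ∈ scenarios A L := take_mem_scenarios hs' hi1
          have hpre : s'.take (i-1) <+: s'.take i := by
            have heq : (s'.take i).take (i-1) = s'.take (i-1) := by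
              rw [List.take_take]; congr 1; omega
            rw [← heq]; exact List.take_prefix _ _
          have := hmono _ h1' _ h2' hpre
          linarith
      · exact le_refl 0
    · intro i s' _ h
      simp only [if_neg h]
    · intro s hs
      dsimp only
      have hcg : ∀ i ∈ Finset.Icc 1 s.length,
          (if 1 ≤ i ∧ i ≤ s.length then V (s.take i) - V (s.take (i-1)) else 0)
            = V (s.take i) - V (s.take (i-1)) := by
        intro i hi; rw [Finset.mem_Icc] at hi; rw [if_pos hi]
      rw [Finset.sum_congr rfl hcg, sum_Icc_sub (fun i => V (s.take i))]
      simp [hV0]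
    · intro P hP hfull s hs
      have hsF : s ∈ (scenarios A L).filter (fun s' => s <+: s') :=
        Finset.mem_filter.mpr ⟨hs, List.prefix_refl s⟩
      have hDpos : 0 < ∑ s' ∈ (scenarios A L).filter (fun s' => s <+: s'), P s' := by
        apply Finset.sum_pos'
        · intro u hu; exact hP.1 u (Finset.mem_filter.mp hu).1
        · exact ⟨s, hsF, hfull s hs⟩
      have hconst : ∀ s' ∈ (scenarios A L).filter (fun s' => s <+: s'),
          P s' * (if 1 ≤ s.length ∧ s.length ≤ s'.length
              then V (s'.take s.length) - V (s'.take (s.length-1)) else 0) = P s' * ν s := by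
        intro s' hs'
        obtain ⟨hs'S, hpre⟩ := Finset.mem_filter.mp hs'
        have h1 : 1 ≤ s.length := List.length_pos_iff.mpr ((mem_scenarios A L s).mp hs).1
        have h2 : s.length ≤ s'.length := hpre.length_le
        have htake : s'.take s.length = s := (List.prefix_iff_eq_take.mp hpre).symm
        have htake' : s'.take (s.length - 1) = s.dropLast := by
          have h3 : s.dropLast = (s'.take s.length).take (s.length - 1) := by
            rw [htake, ← List.dropLast_eq_take]
          rw [h3, List.take_take]
          congr 1; omega
        rw [if_pos ⟨h1, h2⟩, htake, htake', ← hadd s hs]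
      rw [assocVal]
      rw [Finset.sum_congr rfl hconst, ← Finset.sum_mul, mul_comm,
        mul_div_assoc, div_self hDpos.ne', mul_one]
  · rintro ⟨μ, ⟨hnn, hz, hsum⟩, hval⟩
    have key : ∀ t ∈ scenarios A L, ∀ t' ∈ scenarios A L, t <+: t' → μ t.length t' = ν t := by
      intro t ht t' ht' hpre
      set F := (scenarios A L).filter (fun u => t <+: u) with hF
      set N : ℝ := ((scenarios A L).card : ℝ) with hN
      have hNE : (scenarios A L).Nonempty := by
        refine ⟨[Classical.arbitrary A], ?_⟩
        rw [mem_scenarios]; simp [hL]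
      have hNpos : 0 < N := by
        rw [hN]; exact_mod_cast Finset.card_pos.mpr hNE
      have htF : t ∈ F := Finset.mem_filter.mpr ⟨ht, List.prefix_refl t⟩
      have ht'F : t' ∈ F := Finset.mem_filter.mpr ⟨ht', hpre⟩
      have hP0 : IsProb (scenarios A L) (fun _ => N⁻¹) := by
        constructor
        · intro u _; positivity
        · rw [Finset.sum_const, nsmul_eq_mul, ← hN, mul_inv_cancel₀ hNpos.ne']
      have hfull0 : FullSupport (scenarios A L) (fun _ => N⁻¹) := fun u _ => by positivity
      have hD0pos : 0 < ∑ u ∈ F, N⁻¹ :=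
        Finset.sum_pos (fun u _ => by positivity) ⟨t, htF⟩
      have h0 : ∑ u ∈ F, N⁻¹ * μ t.length u = ν t * ∑ u ∈ F, N⁻¹ := by
        have hh := hval _ hP0 hfull0 t ht
        rw [assocVal] at hh
        exact (div_eq_iff hD0pos.ne').mp hh
      have hμconst : ∀ u ∈ F, μ t.length u = μ t.length t := by
        intro u huF
        by_cases hut : u = t
        · rw [hut]
        · have hu𝕊 : u ∈ scenarios A L := (Finset.mem_filter.mp huF).1
          set ε : ℝ := (2 * N)⁻¹ with hε
          have hεpos : 0 < ε := by positivity
          have hhalf : N⁻¹ - ε = ε := by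
            rw [hε]; field_simp; ring
          set P1 : List A → ℝ :=
            fun v => N⁻¹ + ((if v = u then ε else 0) + (if v = t then -ε else 0)) with hP1def
          have hP1pos : ∀ v ∈ scenarios A L, 0 < P1 v := by
            intro v _
            rw [hP1def]
            dsimp only
            have hNi : 0 < N⁻¹ := by positivity
            split_ifs with hvu hvt hvt
            · exact absurd (hvu.symm.trans hvt) hut
            · linarith
            · linarith
            · linarith
          have hP1prob : IsProb (scenarios A L) P1 := by
            refine ⟨fun v hv => (hP1pos v hv).le, ?_⟩
            rw [hP1def]
            dsimp only
            rw [Finset.sum_add_distrib, Finset.sum_add_distrib, hP0.2]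
            rw [Finset.sum_ite_eq' (scenarios A L) u (fun _ => ε),
              Finset.sum_ite_eq' (scenarios A L) t (fun _ => -ε),
              if_pos hu𝕊, if_pos ht]
            ring
          have hD1 : ∑ v ∈ F, P1 v = ∑ v ∈ F, N⁻¹ := by
            rw [hP1def]
            dsimp only
            rw [Finset.sum_add_distrib, Finset.sum_add_distrib]
            rw [Finset.sum_ite_eq' F u (fun _ => ε),
              Finset.sum_ite_eq' F t (fun _ => -ε),
              if_pos huF, if_pos htF]
            ring
          have hexp : ∑ v ∈ F, P1 v * μ t.length v
              = (∑ v ∈ F, N⁻¹ * μ t.length v) + (ε * μ t.length u + -ε * μ t.length t) := by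
            rw [hP1def]
            dsimp only
            rw [Finset.sum_congr rfl (fun v _ => add_mul (N⁻¹)
              ((if v = u then ε else 0) + (if v = t then -ε else 0)) (μ t.length v)),
              Finset.sum_add_distrib]
            congr 1
            rw [Finset.sum_congr rfl (fun v _ => add_mul (if v = u then ε else 0)
              (if v = t then -ε else 0) (μ t.length v)), Finset.sum_add_distrib]
            simp only [ite_mul, zero_mul, Finset.sum_add_distrib,
              Finset.sum_ite_eq', huF, htF, if_pos]
          have h1 : ∑ v ∈ F, P1 v * μ t.length v = ν t * ∑ v ∈ F, P1 v := by
            have hD1pos : 0 < ∑ v ∈ F, P1 v := by rw [hD1]; exact hD0pos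
            have hh := hval P1 hP1prob hP1pos t ht
            rw [assocVal] at hh
            exact (div_eq_iff hD1pos.ne').mp hh
          rw [hexp, h0, hD1, ← h0] at h1
          have hz' : ε * (μ t.length u - μ t.length t) = 0 := by linarith
          rcases mul_eq_zero.mp hz' with h | h
          · exact absurd h hεpos.ne'
          · linarith [sub_eq_zero.mp h]
      have hμt : μ t.length t = ν t := by
        have h0' : ∑ u ∈ F, N⁻¹ * μ t.length u = ∑ u ∈ F, N⁻¹ * μ t.length t :=
          Finset.sum_congr rfl (fun u hu => by rw [hμconst u hu])
        rw [h0'] at h0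
        rw [← Finset.sum_mul] at h0
        rw [mul_comm (ν t)] at h0
        exact mul_left_cancel₀ hD0pos.ne' h0
      rw [hμconst t' ht'F, hμt]
    have hVsum : ∀ u ∈ scenarios A L, V u = ∑ i ∈ Finset.Icc 1 u.length, ν (u.take i) := by
      intro u hu
      rw [← hsum u hu]
      refine Finset.sum_congr rfl (fun i hi => ?_)
      rw [Finset.mem_Icc] at hi
      have hmem : u.take i ∈ scenarios A L := take_mem_scenarios hu hi.1
      have hlen : (u.take i).length = i := by rw [List.length_take]; omega
      have hkey := key _ hmem u hu (List.take_prefix i u)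
      rw [hlen] at hkey
      exact hkey
    intro s hs
    have h1 : 1 ≤ s.length := List.length_pos_iff.mpr ((mem_scenarios A L s).mp hs).1
    rcases Nat.lt_or_ge s.length 2 with hl | hl
    · have hlen1 : s.length = 1 := by omega
      have hdrop : s.dropLast = [] := by
        apply List.length_eq_zero_iff.mp
        rw [List.length_dropLast, hlen1]
      have hVs := hVsum s hs
      rw [hlen1] at hVs
      simp only [Finset.Icc_self, Finset.sum_singleton] at hVs
      have htk : s.take 1 = s := List.take_of_length_le (by omega)
      rw [htk] at hVs
      rw [hdrop, hV0, sub_zero, hVs]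
    · have hslen : s.length ≤ L := ((mem_scenarios A L s).mp hs).2
      have hdropmem : s.dropLast ∈ scenarios A L := by
        rw [mem_scenarios]
        constructor
        · intro hnil
          have := congrArg List.length hnil
          rw [List.length_dropLast] at this
          simp at this; omega
        · rw [List.length_dropLast]; omega
      obtain ⟨m, hm⟩ : ∃ m, s.length = m + 1 := ⟨s.length - 1, by omega⟩
      have hVs := hVsum s hs
      have hVd := hVsum s.dropLast hdropmem
      have hlen_d : s.dropLast.length = m := by rw [List.length_dropLast, hm]; omega
      have htake_d : ∀ i ∈ Finset.Icc 1 m, ν (s.dropLast.take i) = ν (s.take i) := by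
        intro i hi; rw [Finset.mem_Icc] at hi
        congr 1
        rw [List.dropLast_eq_take, List.take_take, hm]
        congr 1; omega
      rw [hlen_d, Finset.sum_congr rfl htake_d] at hVd
      rw [hm, Finset.sum_Icc_succ_top (by omega : 1 ≤ m+1)] at hVs
      have htk : s.take (m+1) = s := by rw [← hm]; exact List.take_length
      rw [htk] at hVs
      linarith


end CoreAttr
end

section
/- Let V : 𝕊 → ℝ be a monotone reward function with V(s) > 0 for every s ∈ 𝕊, and let ν be the additive valuation ν(s) := V(s) − V(s^-). Then the fixed-point attribution μ_ν is a well-defined internal attribution for V, and for every full-support probability P on 𝕊 and every s ∈ 𝕊 one has ν_P^{μ_ν}(s) = ν(s). In particular the additive valuation is an associated valuation whose value does not depend on the probability distribution P. -/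
open Finset

namespace CoreAttr

variable (A : Type) [Fintype A] [DecidableEq A]

variable {A}

lemma take_dropLast' {A : Type} (s : List A) (j : ℕ) (hj : j ≤ s.length) :
    (s.take j).dropLast = s.take (j - 1) := by
  rw [List.dropLast_eq_take, List.length_take, List.take_take]
  congr 1
  omega

lemma sumPrefix_additive {A : Type} (V : List A → ℝ) (hV0 : V [] = 0) (s : List A) :
    sumPrefix (fun t => V t - V t.dropLast) s = V s := by
  unfold sumPrefix
  have h : ∀ j ∈ Finset.Icc 1 s.length,
      V (s.take j) - V ((s.take j).dropLast) = V (s.take j) - V (s.take (j - 1)) := by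
    intro j hj
    simp only [Finset.mem_Icc] at hj
    rw [take_dropLast' s j hj.2]
  rw [Finset.sum_congr rfl h,
    show Finset.Icc 1 s.length = Finset.Ico 1 (s.length + 1) from (Finset.Ico_add_one_right_eq_Icc 1 s.length).symm,
    Finset.sum_Ico_eq_sum_range]
  have : ∀ i ∈ Finset.range (s.length + 1 - 1),
      V (s.take (1 + i)) - V (s.take (1 + i - 1))
        = V (s.take (i + 1)) - V (s.take i) := by
    intro i _
    rw [show 1 + i = i + 1 from by omega, show i + 1 - 1 = i from by omega]
  rw [Finset.sum_congr rfl this, Finset.sum_range_sub (fun k => V (s.take k))]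
  simp [hV0]

/-- **The fixed-point attribution of the additive valuation is a well-defined internal
attribution, and its associated valuation is the additive valuation under every
full-support probability `P` (distributional invariance).** -/
theorem additive_valuation_is_robust_associated_valuation
    {A : Type} [Fintype A] [DecidableEq A] [Nonempty A] (L : ℕ) (hL : 1 ≤ L)
    (V : List A → ℝ) (hV0 : V [] = 0)
    (hmono : ∀ s ∈ scenarios A L, ∀ s' ∈ scenarios A L, s <+: s' → V s ≤ V s')
    (hVpos : ∀ s ∈ scenarios A L, 0 < V s) :
    IsInternalAttr (scenarios A L) V (muFP V (fun s => V s - V s.dropLast)) ∧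
      ∀ P : List A → ℝ, IsProb (scenarios A L) P → FullSupport (scenarios A L) P →
        ∀ s ∈ scenarios A L,
          assocVal (scenarios A L) P (muFP V (fun s => V s - V s.dropLast)) s =
            V s - V s.dropLast := by
  set ν : List A → ℝ := fun s => V s - V s.dropLast with hν
  have hsum : ∀ s : List A, sumPrefix ν s = V s := fun s => sumPrefix_additive V hV0 s
  have htake : ∀ s ∈ scenarios A L, ∀ j, 1 ≤ j → j ≤ s.length → s.take j ∈ scenarios A L := by
    intro s hs j h1 h2
    rw [mem_scenarios] at hs ⊢
    have hlen : (s.take j).length = j := by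
      rw [List.length_take]; omega
    constructor
    · intro h
      rw [h] at hlen; simp at hlen; omega
    · omega
  have hνnn : ∀ s ∈ scenarios A L, ∀ j, 1 ≤ j → j ≤ s.length → 0 ≤ ν (s.take j) := by
    intro s hs j h1 h2
    have hmem := htake s hs j h1 h2
    have hdrop : (s.take j).dropLast = s.take (j - 1) := take_dropLast' s j h2
    by_cases hj : j = 1
    · subst hj
      have : (s.take 1).dropLast = [] := by rw [hdrop]; simp
      simp only [hν, this, hV0, sub_zero]
      exact (hVpos _ hmem).le
    · have hmem' := htake s hs (j - 1) (by omega) (by omega)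
      have hpref : s.take (j - 1) <+: s.take j := by
        have := List.take_prefix (j - 1) (s.take j)
        rwa [List.take_take, min_eq_left (by omega : j - 1 ≤ j)] at this
      have := hmono _ hmem' _ hmem hpref
      simp only [hν, hdrop]
      linarith
  have hVne : ∀ s ∈ scenarios A L, V s ≠ 0 := fun s hs => (hVpos s hs).ne'
  have hmu : ∀ s ∈ scenarios A L, ∀ i, 1 ≤ i → i ≤ s.length →
      muFP V ν i s = ν (s.take i) := by
    intro s hs i h1 h2
    rw [muFP, if_pos ⟨h1, h2⟩, hsum, mul_div_assoc, div_self (hVne s hs), mul_one]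
  refine ⟨⟨?_, ?_, ?_⟩, ?_⟩
  · intro i s hs
    by_cases h : 1 ≤ i ∧ i ≤ s.length
    · rw [hmu s hs i h.1 h.2]
      exact hνnn s hs i h.1 h.2
    · rw [muFP, if_neg h]
  · intro i s _ h
    rw [muFP, if_neg h]
  · intro s hs
    have : ∀ i ∈ Finset.Icc 1 s.length, muFP V ν i s = ν (s.take i) := by
      intro i hi
      simp only [Finset.mem_Icc] at hi
      exact hmu s hs i hi.1 hi.2
    rw [Finset.sum_congr rfl this]
    exact hsum s
  · intro P hP hFS s hs
    have hsne : s ≠ [] := ((mem_scenarios A L s).mp hs).1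
    have hslen : 1 ≤ s.length := List.length_pos_iff.mpr hsne
    have hterm : ∀ s' ∈ (scenarios A L).filter (fun s' => s <+: s'),
        P s' * muFP V ν s.length s' = P s' * ν s := by
      intro s' hs'
      rw [Finset.mem_filter] at hs'
      have hpre : s'.take s.length = s := (List.prefix_iff_eq_take.mp hs'.2).symm
      rw [hmu s' hs'.1 s.length hslen hs'.2.length_le, hpre]
    have hDpos : 0 < ∑ s' ∈ (scenarios A L).filter (fun s' => s <+: s'), P s' := by
      apply Finset.sum_pos'
      · intro s' hs'
        rw [Finset.mem_filter] at hs'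
        exact (hP.1 s' hs'.1)
      · exact ⟨s, Finset.mem_filter.mpr ⟨hs, List.prefix_refl s⟩, hFS s hs⟩
    rw [assocVal, Finset.sum_congr rfl hterm]
    rw [← Finset.sum_mul, mul_comm, mul_div_assoc, div_self hDpos.ne', mul_one]


end CoreAttr
end

section
/- Let V : 𝕊 → ℝ be a reward function (with the convention V(empty list) = 0) and let ν : 𝕊 → ℝ be a valuation. Suppose there exists an internal attribution μ for V such that ν_P^μ(s) = ν(s) for every full-support probability P on 𝕊 and every s ∈ 𝕊. Then ν is additive for V, i.e. ν(s) = V(s) − V(s^-) for every s ∈ 𝕊. -/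
open Finset

namespace CoreAttr

variable (A : Type) [Fintype A] [DecidableEq A]

variable {A}

/-- **Distributional robustness implies additivity.**  If some internal attribution
`μ` for `V` has associated valuation equal to `ν` under every full-support
probability `P`, then `ν` is additive for `V`. -/
theorem robust_associated_valuation_implies_additive
    {A : Type} [Fintype A] [DecidableEq A] [Nonempty A] (L : ℕ) (hL : 1 ≤ L)
    (V : List A → ℝ) (hV0 : V [] = 0)
    (ν : List A → ℝ)
    (hrobust : ∃ μ : ℕ → List A → ℝ, IsInternalAttr (scenarios A L) V μ ∧
      ∀ P : List A → ℝ, IsProb (scenarios A L) P → FullSupport (scenarios A L) P →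
        ∀ s ∈ scenarios A L, assocVal (scenarios A L) P μ s = ν s) :
    ∀ s ∈ scenarios A L, ν s = V s - V s.dropLast := by
  obtain ⟨μ, ⟨hpos, hzero, hsum⟩, hval⟩ := hrobust
  obtain ⟨a⟩ := (inferInstance : Nonempty A)
  have hane : ([a] : List A) ∈ scenarios A L := by
    simp [mem_scenarios, hL]
  have hcard : 0 < (scenarios A L).card := Finset.card_pos.mpr ⟨_, hane⟩
  set n : ℕ := (scenarios A L).card with hn
  have hnR : (0 : ℝ) < (n : ℝ) := by exact_mod_cast hcard
  -- Key: μ s.length s' = ν s for every extension s' of s.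
  have key : ∀ s ∈ scenarios A L, ∀ s' ∈ scenarios A L, s <+: s' →
      μ s.length s' = ν s := by
    intro s hs s' hs' hpre
    set T := (scenarios A L).filter (fun t => s <+: t) with hT
    have hs'T : s' ∈ T := Finset.mem_filter.mpr ⟨hs', hpre⟩
    have hTcard : 0 < T.card := Finset.card_pos.mpr ⟨_, hs'T⟩
    have hkR : (0 : ℝ) < (T.card : ℝ) := by exact_mod_cast hTcard
    set m : ℝ := ∑ t ∈ T, μ s.length t with hm
    -- uniform probability
    have h1 : assocVal (scenarios A L) (fun _ => (n : ℝ)⁻¹) μ s = ν s := by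
      apply hval
      · exact ⟨fun t _ => by positivity,
          by rw [Finset.sum_const, nsmul_eq_mul, mul_inv_cancel₀ hnR.ne']⟩
      · exact fun t _ => by positivity
      · exact hs
    -- perturbed probability with extra mass at s'
    set c : ℝ := ((n : ℝ) + 1)⁻¹ with hc
    have hcpos : 0 < c := by positivity
    have h2 : assocVal (scenarios A L)
        (fun t => c + if t = s' then c else 0) μ s = ν s := by
      apply hval
      · refine ⟨fun t _ => by positivity, ?_⟩
        rw [Finset.sum_add_distrib, Finset.sum_const, nsmul_eq_mul,
          Finset.sum_ite_eq' (scenarios A L) s' (fun _ => c), if_pos hs', hc]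
        field_simp
        rfl
      · exact fun t _ => by positivity
      · exact hs
    rw [assocVal] at h1 h2
    rw [← hT] at h1 h2
    have e1 : (∑ t ∈ T, (n : ℝ)⁻¹ * μ s.length t) = (n : ℝ)⁻¹ * m := by
      rw [hm, Finset.mul_sum]
    have e2 : (∑ t ∈ T, (n : ℝ)⁻¹) = (T.card : ℝ) * (n : ℝ)⁻¹ := by
      rw [Finset.sum_const, nsmul_eq_mul]
    rw [e1, e2] at h1
    have hm_eq : m = (T.card : ℝ) * ν s := by
      have hden : (T.card : ℝ) * (n : ℝ)⁻¹ ≠ 0 := by positivity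
      field_simp at h1
      nlinarith [h1]
    have e3 : (∑ t ∈ T, (c + if t = s' then c else 0) * μ s.length t)
        = c * m + c * μ s.length s' := by
      simp only [add_mul, Finset.sum_add_distrib, hm, Finset.mul_sum]
      congr 1
      simp only [ite_mul, zero_mul]
      rw [Finset.sum_ite_eq' T s' (fun t => c * μ s.length t), if_pos hs'T]
    have e4 : (∑ t ∈ T, (c + if t = s' then c else 0))
        = (T.card : ℝ) * c + c := by
      rw [Finset.sum_add_distrib, Finset.sum_const, nsmul_eq_mul,
        Finset.sum_ite_eq' T s' (fun _ => c), if_pos hs'T]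
    rw [e3, e4, hm_eq] at h2
    have hden2 : (T.card : ℝ) * c + c ≠ 0 := by positivity
    field_simp at h2
    nlinarith [h2]
  -- hence μ j s = ν (s.take j)
  have hmu : ∀ s ∈ scenarios A L, ∀ j ∈ Finset.Icc 1 s.length,
      μ j s = ν (s.take j) := by
    intro s hs j hj
    rw [Finset.mem_Icc] at hj
    have hsl : s.length ≤ L := ((mem_scenarios A L s).mp hs).2
    have hlen : (s.take j).length = j := by
      rw [List.length_take]; omega
    have hp : s.take j ∈ scenarios A L := by
      rw [mem_scenarios]
      constructor
      · intro h
        rw [h] at hlen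
        simp at hlen; omega
      · rw [hlen]; omega
    have := key _ hp s hs (List.take_prefix j s)
    rwa [hlen] at this
  have hVsum : ∀ s ∈ scenarios A L,
      V s = ∑ j ∈ Finset.Icc 1 s.length, ν (s.take j) := by
    intro s hs
    rw [← hsum s hs]
    exact Finset.sum_congr rfl (fun j hj => hmu s hs j hj)
  intro s hs
  obtain ⟨hne, hlen⟩ := (mem_scenarios A L s).mp hs
  obtain ⟨k, hk⟩ : ∃ k, s.length = k + 1 := by
    cases h : s.length with
    | zero => exact absurd (List.length_eq_zero_iff.mp h) hne
    | succ k => exact ⟨k, rfl⟩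
  have hVs : V s = (∑ j ∈ Finset.Icc 1 k, ν (s.take j)) + ν s := by
    rw [hVsum s hs, hk, Finset.sum_Icc_succ_top (by omega : 1 ≤ k + 1)]
    congr 1
    rw [← hk, List.take_length]
  have hdrop : V s.dropLast = ∑ j ∈ Finset.Icc 1 k, ν (s.take j) := by
    rcases Nat.eq_zero_or_pos k with hk0 | hk0
    · subst hk0
      have : s.dropLast = [] := List.length_eq_zero_iff.mp (by
        rw [List.length_dropLast, hk])
      rw [this, hV0]
      simp
    · have hdl : s.dropLast ∈ scenarios A L := by
        rw [mem_scenarios]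
        constructor
        · intro h
          have := congrArg List.length h
          rw [List.length_dropLast, hk] at this
          simp at this; omega
        · rw [List.length_dropLast]; omega
      rw [hVsum _ hdl, List.length_dropLast, hk, Nat.add_sub_cancel]
      refine Finset.sum_congr rfl (fun j hj => ?_)
      rw [Finset.mem_Icc] at hj
      congr 1
      rw [List.dropLast_eq_take, List.take_take, hk, Nat.add_sub_cancel,
        min_eq_left hj.2]
  rw [hVs, hdrop]
  ring

end CoreAttr
end

section
/- Let V : 𝕊 → ℝ be a reward function and let μ¹ and μ² be two internal attributions for V such that for every full-support probability P on 𝕊 and every s ∈ 𝕊 one has ν_P^{μ¹}(s) = ν_P^{μ²}(s). Then μ¹ = μ², i.e. μ¹(i,s) = μ²(i,s) for every i ∈ ℕ and s ∈ 𝕊. (Uniqueness of the internal attribution whose associated valuation is distributionally robust.) -/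
open Finset

namespace CoreAttr

variable (A : Type) [Fintype A] [DecidableEq A]

variable {A}

/-- **Uniqueness of the internal attribution with distributionally robust associated
valuation.**  If two internal attributions for `V` have the same associated valuation
under every full-support probability, they coincide. -/
theorem internal_attribution_unique_of_robust
    {A : Type} [Fintype A] [DecidableEq A] [Nonempty A] (L : ℕ) (hL : 1 ≤ L)
    (V : List A → ℝ)
    (μ₁ μ₂ : ℕ → List A → ℝ)
    (h₁ : IsInternalAttr (scenarios A L) V μ₁)
    (h₂ : IsInternalAttr (scenarios A L) V μ₂)
    (heq : ∀ P : List A → ℝ, IsProb (scenarios A L) P → FullSupport (scenarios A L) P →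
      ∀ s ∈ scenarios A L,
        assocVal (scenarios A L) P μ₁ s = assocVal (scenarios A L) P μ₂ s) :
    ∀ i : ℕ, ∀ s ∈ scenarios A L, μ₁ i s = μ₂ i s := by
  intro i s hs
  by_cases hi : 1 ≤ i ∧ i ≤ s.length
  · -- main case
    have hsS := (mem_scenarios A L s).mp hs
    set t := s.take i with ht
    have hts : t <+: s := List.take_prefix i s
    have htlen : t.length = i := by
      rw [ht, List.length_take]; exact min_eq_left hi.2
    have htS : t ∈ scenarios A L := by
      rw [mem_scenarios]
      refine ⟨?_, ?_⟩
      · intro h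
        have := htlen
        rw [h] at this
        simp at this
        omega
      · rw [htlen]; exact le_trans hi.2 hsS.2
    set F := (scenarios A L).filter (fun s' => t <+: s') with hF
    have hsF : s ∈ F := Finset.mem_filter.mpr ⟨hs, hts⟩
    have hcardpos : 0 < (scenarios A L).card := Finset.card_pos.mpr ⟨s, hs⟩
    set N : ℝ := ((scenarios A L).card : ℝ) with hN
    have hNpos : 0 < N := by rw [hN]; exact_mod_cast hcardpos
    have key : ∀ P : List A → ℝ, IsProb (scenarios A L) P → FullSupport (scenarios A L) P →
        ∑ s' ∈ F, P s' * μ₁ i s' = ∑ s' ∈ F, P s' * μ₂ i s' := by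
      intro P hP hFS
      have hden : 0 < ∑ s' ∈ F, P s' :=
        Finset.sum_pos (fun x hx => hFS x (Finset.mem_filter.mp hx).1) ⟨s, hsF⟩
      have h := heq P hP hFS t htS
      rw [assocVal, assocVal, htlen, div_eq_div_iff hden.ne' hden.ne'] at h
      exact mul_right_cancel₀ hden.ne' h
    -- uniform probability
    have hP1prob : IsProb (scenarios A L) (fun _ => 1 / N) := by
      constructor
      · intro x _; positivity
      · rw [Finset.sum_const, nsmul_eq_mul, mul_one_div, div_self hNpos.ne']
    have hP1fs : FullSupport (scenarios A L) (fun _ => 1 / N) := by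
      intro x _; positivity
    have S1 : ∑ s' ∈ F, μ₁ i s' = ∑ s' ∈ F, μ₂ i s' := by
      have := key _ hP1prob hP1fs
      simp only [one_div, ← Finset.mul_sum] at this
      exact mul_left_cancel₀ (by positivity) this
    -- tilted probability
    set c : ℝ := 1 / (N + 1) with hc
    have hcpos : 0 < c := by rw [hc]; positivity
    set P2 : List A → ℝ := fun x => c + (if x = s then c else 0) with hP2
    have hP2prob : IsProb (scenarios A L) P2 := by
      constructor
      · intro x _
        rw [hP2]
        dsimp only
        split <;> positivity
      · rw [hP2]
        rw [Finset.sum_add_distrib, Finset.sum_const, nsmul_eq_mul,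
          Finset.sum_ite_eq' (scenarios A L) s (fun _ => c), if_pos hs, hc]
        field_simp
        rw [hN]
    have hP2fs : FullSupport (scenarios A L) P2 := by
      intro x _
      rw [hP2]
      dsimp only
      split <;> positivity
    have S2 := key _ hP2prob hP2fs
    rw [hP2] at S2
    simp only [add_mul, ite_mul, zero_mul, Finset.sum_add_distrib,
      Finset.sum_ite_eq' F s, if_pos hsF, ← Finset.mul_sum, S1] at S2
    have : c * μ₁ i s = c * μ₂ i s := by linarith
    exact mul_left_cancel₀ hcpos.ne' this
  · rw [h₁.2.1 i s hs hi, h₂.2.1 i s hs hi]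


end CoreAttr
end

section
/- Let P be a full-support probability on 𝕊 and let V : 𝕊 → ℝ be a monotone reward function with V(s) > V(s^-) for every s ∈ 𝕊 (so in particular V(s) > 0). Then a valuation ν : 𝕊 → ℝ with ν(s) > 0 for all s satisfies the fixed-point equation ν(s) = ν_P^{μ_ν}(s) for all s ∈ 𝕊 if and only if ν is additive for V, i.e. ν(s) = V(s) − V(s^-) for all s ∈ 𝕊. -/
open Finset

namespace CoreAttr

variable (A : Type) [Fintype A] [DecidableEq A]

variable {A}

section Aux

variable {A : Type} [Fintype A] [DecidableEq A]

lemma length_pos_of_mem {L : ℕ} {s : List A} (hs : s ∈ scenarios A L) : 1 ≤ s.length :=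
  List.length_pos_iff.mpr ((mem_scenarios A L s).mp hs).1

lemma take_mem {L : ℕ} {s : List A} (hs : s ∈ scenarios A L) {j : ℕ} (hj : 1 ≤ j) :
    s.take j ∈ scenarios A L := by
  rw [mem_scenarios] at hs ⊢
  refine ⟨?_, ?_⟩
  · intro h
    rcases List.take_eq_nil_iff.mp h with h1 | h2
    · omega
    · exact hs.1 h2
  · rw [List.length_take]
    exact le_trans (min_le_right _ _) hs.2

lemma sumPrefix_pos {L : ℕ} {ν : List A → ℝ} (hν : ∀ s ∈ scenarios A L, 0 < ν s)
    {s : List A} (hs : s ∈ scenarios A L) : 0 < sumPrefix ν s := by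
  apply Finset.sum_pos
  · intro j hj
    exact hν _ (take_mem hs (Finset.mem_Icc.mp hj).1)
  · exact ⟨1, Finset.mem_Icc.mpr ⟨le_refl 1, length_pos_of_mem hs⟩⟩

lemma sumPrefix_rec (ν : List A → ℝ) {s : List A} (hs : s ≠ []) :
    sumPrefix ν s = sumPrefix ν s.dropLast + ν s := by
  have h1 : 1 ≤ s.length := List.length_pos_iff.mpr hs
  obtain ⟨n, hn⟩ : ∃ n, s.length = n + 1 := ⟨s.length - 1, by omega⟩
  unfold sumPrefix
  rw [List.length_dropLast, hn, Finset.sum_Icc_succ_top (by omega), Nat.add_sub_cancel]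
  congr 1
  · apply Finset.sum_congr rfl
    intro j hj
    rw [Finset.mem_Icc] at hj
    rw [List.dropLast_eq_take, List.take_take, hn, Nat.add_sub_cancel,
      min_eq_left (by omega : j ≤ n)]
  · rw [← hn, List.take_length]

lemma sumPrefix_eq_V {L : ℕ} {V ν : List A → ℝ} (hV0 : V [] = 0)
    (hadd : ∀ s ∈ scenarios A L, ν s = V s - V s.dropLast) :
    ∀ s ∈ scenarios A L, sumPrefix ν s = V s := by
  suffices h : ∀ n, ∀ s ∈ scenarios A L, s.length = n → sumPrefix ν s = V s by
    intro s hs; exact h s.length s hs rfl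
  intro n
  induction n using Nat.strong_induction_on with
  | _ n ih =>
    intro s hs hlen
    have hne : s ≠ [] := ((mem_scenarios A L s).mp hs).1
    have hl1 : 1 ≤ s.length := List.length_pos_iff.mpr hne
    rw [sumPrefix_rec ν hne, hadd s hs]
    by_cases h2 : s.dropLast = []
    · rw [h2]
      simp [sumPrefix, hV0]
    · have hd : s.dropLast ∈ scenarios A L := by
        rw [mem_scenarios]
        refine ⟨h2, ?_⟩
        rw [List.length_dropLast]
        have := ((mem_scenarios A L s).mp hs).2
        omega
      rw [ih s.dropLast.length (by rw [List.length_dropLast]; omega) s.dropLast hd rfl]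
      ring

lemma filter_prefix_eq {L : ℕ} {s : List A} (hs : s ∈ scenarios A L) :
    (scenarios A L).filter (fun s' => s <+: s') =
      insert s (Finset.univ.biUnion fun a : A =>
        (scenarios A L).filter (fun s' => s ++ [a] <+: s')) := by
  ext s'
  simp only [Finset.mem_filter, Finset.mem_insert, Finset.mem_biUnion, Finset.mem_univ,
    true_and]
  constructor
  · rintro ⟨hS, hpre⟩
    by_cases he : s' = s
    · exact Or.inl he
    · obtain ⟨t, ht⟩ := hpre
      cases t with
      | nil => exact absurd (by simpa using ht.symm) he
      | cons a u =>
        exact Or.inr ⟨a, hS, ⟨u, by rw [← ht]; simp⟩⟩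
  · rintro (rfl | ⟨a, hS, hpre⟩)
    · exact ⟨hs, List.prefix_refl _⟩
    · exact ⟨hS, ((List.prefix_append _ [a]).trans hpre)⟩

lemma sum_prefix_decomp {L : ℕ} {s : List A} (hs : s ∈ scenarios A L) (h : List A → ℝ) :
    ∑ s' ∈ (scenarios A L).filter (fun s' => s <+: s'), h s'
      = h s + ∑ a : A, ∑ s' ∈ (scenarios A L).filter (fun s' => s ++ [a] <+: s'), h s' := by
  rw [filter_prefix_eq hs, Finset.sum_insert, Finset.sum_biUnion]
  · intro a _ b _ hab
    apply Finset.disjoint_left.mpr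
    intro s' h1 h2
    simp only [Finset.mem_filter] at h1 h2
    apply hab
    have hpp : s ++ [a] <+: s ++ [b] :=
      List.prefix_of_prefix_length_le h1.2 h2.2 (by simp)
    have heq : s ++ [a] = s ++ [b] := hpp.eq_of_length (by simp)
    simpa using heq
  · simp only [Finset.mem_biUnion, Finset.mem_univ, true_and, Finset.mem_filter, not_exists]
    rintro a ⟨-, hpre⟩
    have := hpre.length_le
    simp at this

lemma assoc_eq_iff {L : ℕ} (P V ν : List A → ℝ)
    (hP0 : ∀ s ∈ scenarios A L, 0 ≤ P s) (hPfull : FullSupport (scenarios A L) P)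
    (hSP : ∀ s ∈ scenarios A L, 0 < sumPrefix ν s)
    {s : List A} (hs : s ∈ scenarios A L) (hνs : 0 < ν s) :
    ν s = assocVal (scenarios A L) P (muFP V ν) s ↔
      ∑ s' ∈ (scenarios A L).filter (fun s' => s <+: s'),
        P s' * (V s' / sumPrefix ν s' - 1) = 0 := by
  set F := (scenarios A L).filter (fun s' => s <+: s') with hF
  have hsF : s ∈ F := by rw [hF, Finset.mem_filter]; exact ⟨hs, List.prefix_refl s⟩
  have hD : 0 < ∑ s' ∈ F, P s' :=
    Finset.sum_pos' (fun i hi => hP0 i (Finset.mem_of_mem_filter i hi))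
      ⟨s, hsF, hPfull s hs⟩
  have hnum : ∑ s' ∈ F, P s' * muFP V ν s.length s'
      = ν s * ((∑ s' ∈ F, P s' * (V s' / sumPrefix ν s' - 1)) + ∑ s' ∈ F, P s') := by
    rw [← Finset.sum_add_distrib, Finset.mul_sum]
    apply Finset.sum_congr rfl
    intro s' hs'
    rw [hF, Finset.mem_filter] at hs'
    obtain ⟨hS, hpre⟩ := hs'
    have h1 : 1 ≤ s.length := length_pos_of_mem hs
    have h2 : s.length ≤ s'.length := hpre.length_le
    have htake : s'.take s.length = s := (List.prefix_iff_eq_take.mp hpre).symm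
    rw [muFP, if_pos ⟨h1, h2⟩, htake]
    ring
  rw [assocVal, hnum]
  set G := ∑ s' ∈ F, P s' * (V s' / sumPrefix ν s' - 1) with hG
  set D := ∑ s' ∈ F, P s' with hDdef
  rw [eq_div_iff hD.ne']
  constructor
  · intro h
    have := mul_left_cancel₀ hνs.ne' h
    linarith
  · intro h
    rw [h]
    ring

end Aux

/-- **Fixed-point characterization of the core valuation (Prop. 3).**  A positive
valuation `ν` satisfies `ν = ν_P^{μ_ν}` iff `ν` is additive for `V`. -/
theorem fixed_point_iff_additive
    {A : Type} [Fintype A] [DecidableEq A] [Nonempty A] (L : ℕ) (hL : 1 ≤ L)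
    (P : List A → ℝ) (hP : IsProb (scenarios A L) P)
    (hPfull : FullSupport (scenarios A L) P)
    (V : List A → ℝ) (hV0 : V [] = 0)
    (hmono : ∀ s ∈ scenarios A L, ∀ s' ∈ scenarios A L, s <+: s' → V s ≤ V s')
    (hstrict : ∀ s ∈ scenarios A L, V s.dropLast < V s)
    (ν : List A → ℝ) (hνpos : ∀ s ∈ scenarios A L, 0 < ν s) :
    (∀ s ∈ scenarios A L, ν s = assocVal (scenarios A L) P (muFP V ν) s) ↔
      (∀ s ∈ scenarios A L, ν s = V s - V s.dropLast) := by
  have hSP' : ∀ s ∈ scenarios A L, 0 < sumPrefix ν s := fun s hs => sumPrefix_pos hνpos hs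
  constructor
  · intro hfix
    have hG : ∀ s ∈ scenarios A L,
        ∑ s' ∈ (scenarios A L).filter (fun s' => s <+: s'),
          P s' * (V s' / sumPrefix ν s' - 1) = 0 :=
      fun s hs => (assoc_eq_iff P V ν hP.1 hPfull hSP' hs (hνpos s hs)).mp (hfix s hs)
    have hc : ∀ s ∈ scenarios A L, sumPrefix ν s = V s := by
      intro s hs
      have hzero := hG s hs
      rw [sum_prefix_decomp hs] at hzero
      have hrest : ∀ a : A, (∑ s' ∈ (scenarios A L).filter (fun s' => s ++ [a] <+: s'),
          P s' * (V s' / sumPrefix ν s' - 1)) = 0 := by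
        intro a
        by_cases hlen : s.length + 1 ≤ L
        · exact hG (s ++ [a]) (by rw [mem_scenarios]; simp; omega)
        · rw [Finset.filter_eq_empty_iff.mpr, Finset.sum_empty]
          intro s' hs'
          intro hpre
          have h1 := hpre.length_le
          have h2 := ((mem_scenarios A L s').mp hs').2
          simp at h1
          omega
      simp only [hrest, Finset.sum_const_zero, add_zero] at hzero
      have hPs := hPfull s hs
      have hfac : V s / sumPrefix ν s - 1 = 0 := by
        rcases mul_eq_zero.mp hzero with h | h
        · exact absurd h hPs.ne'
        · exact h
      have hSPs := hSP' s hs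
      have : V s / sumPrefix ν s = 1 := by linarith
      field_simp at this
      linarith
    intro s hs
    have hne : s ≠ [] := ((mem_scenarios A L s).mp hs).1
    have h1 := hc s hs
    rw [sumPrefix_rec ν hne] at h1
    by_cases h2 : s.dropLast = []
    · rw [h2] at h1 ⊢
      simp [sumPrefix] at h1
      rw [hV0]
      linarith
    · have hd : s.dropLast ∈ scenarios A L := by
        rw [mem_scenarios]
        refine ⟨h2, ?_⟩
        rw [List.length_dropLast]
        have := ((mem_scenarios A L s).mp hs).2
        omega
      rw [hc _ hd] at h1
      linarith
  · intro hadd s hs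
    have hspV : ∀ s ∈ scenarios A L, sumPrefix ν s = V s := sumPrefix_eq_V hV0 hadd
    rw [(assoc_eq_iff P V ν hP.1 hPfull hSP' hs (hνpos s hs))]
    apply Finset.sum_eq_zero
    intro s' hs'
    have hS := Finset.mem_of_mem_filter s' hs'
    have hVne : sumPrefix ν s' ≠ 0 := (hSP' s' hS).ne'
    rw [hspV s' hS] at hVne ⊢
    rw [div_self hVne, sub_self, mul_zero]


end CoreAttr
end

section
/- Let P be a full-support probability on 𝕊, let V : 𝕊 → ℝ and let ν : 𝕊 → ℝ with ν(s) > 0 for every s ∈ 𝕊. Suppose that for every s ∈ 𝕊 the conditional expectation identity Σ_{s' ≽ s} P(s')·(V(s') / Σ_{j=1}^{ℓ(s')} ν(s'^j)) = Σ_{s' ≽ s} P(s') holds (i.e. E_{S∼P}[V(S)/Σ_{j=1}^{ℓ(S)} ν(S^j) | S ≽ s] = 1). Then V(s) = Σ_{j=1}^{ℓ(s)} ν(s^j) for every s ∈ 𝕊. -/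
open Finset

namespace CoreAttr

variable (A : Type) [Fintype A] [DecidableEq A]

variable {A}

/-- **The conditional-expectation identity forces the telescoping decomposition.**
If `E_{S∼P}[V(S)/Σ_{j=1}^{ℓ(S)} ν(S^j) | S ≽ s] = 1` for every scenario `s`, then
`V(s) = Σ_{j=1}^{ℓ(s)} ν(s^j)` for every scenario `s`. -/
theorem conditional_identity_implies_telescoping
    {A : Type} [Fintype A] [DecidableEq A] [Nonempty A] (L : ℕ) (hL : 1 ≤ L)
    (P : List A → ℝ) (hP : IsProb (scenarios A L) P)
    (hPfull : FullSupport (scenarios A L) P)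
    (V ν : List A → ℝ) (hνpos : ∀ s ∈ scenarios A L, 0 < ν s)
    (hid : ∀ s ∈ scenarios A L,
      ∑ s' ∈ (scenarios A L).filter (fun s' => s <+: s'), P s' * (V s' / sumPrefix ν s') =
        ∑ s' ∈ (scenarios A L).filter (fun s' => s <+: s'), P s') :
    ∀ s ∈ scenarios A L, V s = sumPrefix ν s := by
  -- positivity of sumPrefix
  have hspos : ∀ s ∈ scenarios A L, 0 < sumPrefix ν s := by
    intro s hs
    obtain ⟨hne, hlen⟩ := (mem_scenarios A L s).mp hs
    have hlp : 1 ≤ s.length := List.length_pos_iff.mpr hne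
    apply Finset.sum_pos
    · intro j hj
      simp only [Finset.mem_Icc] at hj
      apply hνpos
      rw [mem_scenarios]
      constructor
      · have hlj : (s.take j).length = j := by rw [List.length_take]; omega
        intro h
        rw [h] at hlj
        simp at hlj
        omega
      · rw [List.length_take]; omega
    · exact ⟨1, by simp [Finset.mem_Icc]; omega⟩
  -- main cancellation argument
  have main : ∀ s ∈ scenarios A L,
      (∀ s' ∈ ((scenarios A L).filter (fun s' => s <+: s')).erase s,
        P s' * (V s' / sumPrefix ν s') = P s') → V s = sumPrefix ν s := by
    intro s hs hrest
    have hsT : s ∈ (scenarios A L).filter (fun s' => s <+: s') :=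
      Finset.mem_filter.mpr ⟨hs, List.prefix_refl s⟩
    have h1 := (Finset.add_sum_erase _ (fun s' => P s' * (V s' / sumPrefix ν s')) hsT).symm
    have h2 := (Finset.add_sum_erase _ (fun s' => P s') hsT).symm
    have heq : ∑ s' ∈ ((scenarios A L).filter (fun s' => s <+: s')).erase s,
        P s' * (V s' / sumPrefix ν s')
        = ∑ s' ∈ ((scenarios A L).filter (fun s' => s <+: s')).erase s, P s' :=
      Finset.sum_congr rfl hrest
    have hPs : 0 < P s := hPfull s hs
    have hkey : P s * (V s / sumPrefix ν s) = P s := by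
      have := hid s hs
      rw [h1, h2, heq] at this
      linarith
    have hdiv : V s / sumPrefix ν s = 1 := by
      have := mul_right_cancel₀ (ne_of_gt hPs) (by rw [mul_comm, hkey, one_mul] : (V s / sumPrefix ν s) * P s = 1 * P s)
      exact this
    have hSne : sumPrefix ν s ≠ 0 := ne_of_gt (hspos s hs)
    field_simp at hdiv
    exact hdiv
  -- strict extensions are longer
  have hlt : ∀ s s' : List A, s <+: s' → s' ≠ s → s.length < s'.length := by
    intro s s' hpre hne
    have hle := hpre.length_le
    rcases lt_or_eq_of_le hle with h | h
    · exact h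
    · exact absurd (List.IsPrefix.eq_of_length hpre h).symm hne
  have key : ∀ n : ℕ, ∀ s ∈ scenarios A L, L - s.length ≤ n → V s = sumPrefix ν s := by
    intro n
    induction n with
    | zero =>
      intro s hs hn
      obtain ⟨hne, hlen⟩ := (mem_scenarios A L s).mp hs
      apply main s hs
      intro s' hs'
      rw [Finset.mem_erase, Finset.mem_filter] at hs'
      obtain ⟨hne', hmem', hpre'⟩ := hs'
      have := hlt s s' hpre' hne'
      have := ((mem_scenarios A L s').mp hmem').2
      omega
    | succ n ih =>
      intro s hs hn
      apply main s hs
      intro s' hs'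
      rw [Finset.mem_erase, Finset.mem_filter] at hs'
      obtain ⟨hne', hmem', hpre'⟩ := hs'
      have h1 := hlt s s' hpre' hne'
      have h2 : L - s'.length ≤ n := by omega
      have := ih s' hmem' h2
      rw [this]
      have hSne : sumPrefix ν s' ≠ 0 := ne_of_gt (hspos s' hmem')
      field_simp
  intro s hs
  exact key (L - s.length) s hs le_rfl

end CoreAttr
end

section
/- Let P be a full-support probability on 𝕊, let V : 𝕊 → ℝ be monotone with V(s) > 0 for all s ∈ 𝕊, and let ν̂ : 𝕊 → (0, ∞). Define ν*(s) := ν_P^{μ_ν̂}(s) = Σ_{s' ≽ s} P(s')·(ν̂(s)·V(s')/Σ_{q=1}^{ℓ(s')} ν̂(s'^q)) / Σ_{s' ≽ s} P(s'). Then ν* is the maximizer of the surrogate function ν ↦ g(ν | ν̂) over all valuations ν : 𝕊 → (0, ∞): for every ν : 𝕊 → (0, ∞), g(ν | ν̂) ≤ g(ν* | ν̂). -/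
open Finset

namespace CoreAttr

variable (A : Type) [Fintype A] [DecidableEq A]

variable {A}

theorem sum_take_group (L : ℕ) (F : List A → List A → ℝ) :
    ∑ s ∈ scenarios A L, ∑ j ∈ Finset.Icc 1 s.length, F (s.take j) s
      = ∑ t ∈ scenarios A L, ∑ s ∈ (scenarios A L).filter (fun s => t <+: s), F t s := by
  rw [Finset.sum_sigma', Finset.sum_sigma']
  refine Finset.sum_nbij' (fun p => ⟨p.1.take p.2, p.1⟩) (fun q => ⟨q.2, q.1.length⟩)
    ?_ ?_ ?_ ?_ ?_
  · rintro ⟨s, j⟩ hp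
    simp only [Finset.mem_sigma, Finset.mem_Icc, mem_scenarios, Finset.mem_filter] at hp ⊢
    obtain ⟨⟨hne, hlen⟩, h1, h2⟩ := hp
    refine ⟨⟨?_, ?_⟩, ⟨⟨hne, hlen⟩, List.take_prefix _ _⟩⟩
    · intro h
      have := congrArg List.length h
      simp [Nat.min_eq_left h2] at this
      omega
    · simp [Nat.min_eq_left h2]; omega
  · rintro ⟨t, s⟩ hq
    simp only [Finset.mem_sigma, Finset.mem_filter, mem_scenarios, Finset.mem_Icc] at hq ⊢
    obtain ⟨⟨tne, tlen⟩, ⟨sne, slen⟩, hpre⟩ := hq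
    exact ⟨⟨sne, slen⟩, by
      have := List.length_pos_iff.mpr tne; omega, hpre.length_le⟩
  · rintro ⟨s, j⟩ hp
    simp only [Finset.mem_sigma, Finset.mem_Icc, mem_scenarios] at hp
    obtain ⟨⟨hne, hlen⟩, h1, h2⟩ := hp
    simp [Nat.min_eq_left h2]
  · rintro ⟨t, s⟩ hq
    simp only [Finset.mem_sigma, Finset.mem_filter, mem_scenarios] at hq
    obtain ⟨_, _, hpre⟩ := hq
    simp [List.prefix_iff_eq_take.mp hpre |>.symm]
  · rintro ⟨s, j⟩ hp
    rfl

/-- **The MM step maximizes the surrogate (Lemma 1).**  The valuation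
`ν* = ν_P^{μ_ν̂}` maximizes `ν ↦ g(ν | ν̂)` over positive valuations. -/
theorem mm_step_maximizes_surrogate
    {A : Type} [Fintype A] [DecidableEq A] [Nonempty A] (L : ℕ) (hL : 1 ≤ L)
    (P : List A → ℝ) (hP : IsProb (scenarios A L) P)
    (hPfull : FullSupport (scenarios A L) P)
    (V : List A → ℝ) (hV0 : V [] = 0)
    (hmono : ∀ s ∈ scenarios A L, ∀ s' ∈ scenarios A L, s <+: s' → V s ≤ V s')
    (hVpos : ∀ s ∈ scenarios A L, 0 < V s)
    (νh : List A → ℝ) (hνh : ∀ s ∈ scenarios A L, 0 < νh s) :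
    ∀ ν : List A → ℝ, (∀ s ∈ scenarios A L, 0 < ν s) →
      gSurr (scenarios A L) P V ν νh ≤
        gSurr (scenarios A L) P V (assocVal (scenarios A L) P (muFP V νh)) νh := by
  intro ν hν
  set 𝕊 := scenarios A L with h𝕊
  set νs := assocVal 𝕊 P (muFP V νh) with hνs_def
  have htake : ∀ s ∈ 𝕊, ∀ j ∈ Finset.Icc 1 s.length, s.take j ∈ 𝕊 := by
    intro s hs j hj
    rw [h𝕊, mem_scenarios] at hs ⊢
    rw [Finset.mem_Icc] at hj
    constructor
    · intro h
      have := congrArg List.length h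
      simp [Nat.min_eq_left hj.2] at this
      omega
    · simpa [Nat.min_eq_left hj.2] using le_trans hj.2 hs.2
  have hK : ∀ s ∈ 𝕊, 0 < sumPrefix νh s := by
    intro s hs
    have hne : s ≠ [] := ((mem_scenarios A L s).mp hs).1
    unfold sumPrefix
    apply Finset.sum_pos
    · intro j hj; exact hνh _ (htake s hs j hj)
    · exact ⟨1, Finset.mem_Icc.mpr ⟨le_refl 1, List.length_pos_iff.mpr hne⟩⟩
  have hmem_self : ∀ t ∈ 𝕊, t ∈ 𝕊.filter (fun s => t <+: s) :=
    fun t ht => Finset.mem_filter.mpr ⟨ht, List.prefix_refl t⟩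
  have hden : ∀ t ∈ 𝕊, 0 < ∑ s ∈ 𝕊.filter (fun s => t <+: s), P s := by
    intro t ht
    apply Finset.sum_pos'
    · intro s hs; exact hP.1 s (Finset.mem_filter.mp hs).1
    · exact ⟨t, hmem_self t ht, hPfull t ht⟩
  have hmu : ∀ t ∈ 𝕊, ∀ s ∈ 𝕊.filter (fun s => t <+: s),
      muFP V νh t.length s = νh t * V s / sumPrefix νh s := by
    intro t ht s hs
    obtain ⟨hs𝕊, hpre⟩ := Finset.mem_filter.mp hs
    have htne : t ≠ [] := ((mem_scenarios A L t).mp ht).1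
    have h1 : 1 ≤ t.length := List.length_pos_iff.mpr htne
    have h2 : t.length ≤ s.length := hpre.length_le
    have hts : s.take t.length = t := (List.prefix_iff_eq_take.mp hpre).symm
    rw [muFP, if_pos ⟨h1, h2⟩, hts]
  have hnum : ∀ t ∈ 𝕊, 0 < ∑ s ∈ 𝕊.filter (fun s => t <+: s), P s * muFP V νh t.length s := by
    intro t ht
    apply Finset.sum_pos
    · intro s hs
      obtain ⟨hs𝕊, hpre⟩ := Finset.mem_filter.mp hs
      rw [hmu t ht s hs]
      exact mul_pos (hPfull s hs𝕊)
        (div_pos (mul_pos (hνh t ht) (hVpos s hs𝕊)) (hK s hs𝕊))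
    · exact ⟨t, hmem_self t ht⟩
  have hνspos : ∀ t ∈ 𝕊, 0 < νs t := fun t ht => div_pos (hnum t ht) (hden t ht)
  have hνseq : ∀ t ∈ 𝕊, νs t * (∑ s ∈ 𝕊.filter (fun s => t <+: s), P s)
      = ∑ s ∈ 𝕊.filter (fun s => t <+: s), P s * muFP V νh t.length s := by
    intro t ht
    rw [hνs_def]
    unfold assocVal
    rw [div_mul_cancel₀ _ (hden t ht).ne']
  have key : gSurr 𝕊 P V ν νh ≤ gSurr 𝕊 P V νs νh +
      ∑ s ∈ 𝕊, P s * ∑ j ∈ Finset.Icc 1 s.length,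
        (νh (s.take j) * V s / sumPrefix νh s * (ν (s.take j) / νs (s.take j) - 1)
          - (ν (s.take j) - νs (s.take j))) := by
    rw [gSurr, gSurr, ← Finset.sum_add_distrib]
    apply Finset.sum_le_sum
    intro s hs
    rw [← mul_add]
    apply mul_le_mul_of_nonneg_left _ (hP.1 s hs)
    rw [← Finset.sum_add_distrib]
    apply Finset.sum_le_sum
    intro j hj
    have ht𝕊 := htake s hs j hj
    set t := s.take j with hts
    have hc : 0 ≤ νh t * V s / sumPrefix νh s :=
      le_of_lt (div_pos (mul_pos (hνh t ht𝕊) (hVpos s hs)) (hK s hs))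
    have hlog : Real.log (ν t / νh t * sumPrefix νh s)
        - Real.log (νs t / νh t * sumPrefix νh s) ≤ ν t / νs t - 1 := by
      have hA : 0 < ν t / νh t * sumPrefix νh s :=
        mul_pos (div_pos (hν t ht𝕊) (hνh t ht𝕊)) (hK s hs)
      have hB : 0 < νs t / νh t * sumPrefix νh s :=
        mul_pos (div_pos (hνspos t ht𝕊) (hνh t ht𝕊)) (hK s hs)
      rw [← Real.log_div hA.ne' hB.ne']
      have hAB : ν t / νh t * sumPrefix νh s / (νs t / νh t * sumPrefix νh s)
          = ν t / νs t := by
        have h1 : νh t ≠ 0 := (hνh t ht𝕊).ne'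
        have h2 : sumPrefix νh s ≠ 0 := (hK s hs).ne'
        have h3 : νs t ≠ 0 := (hνspos t ht𝕊).ne'
        field_simp
      rw [hAB]
      exact Real.log_le_sub_one_of_pos (div_pos (hν t ht𝕊) (hνspos t ht𝕊))
    nlinarith [mul_le_mul_of_nonneg_left hlog hc]
  have hE : (∑ s ∈ 𝕊, P s * ∑ j ∈ Finset.Icc 1 s.length,
        (νh (s.take j) * V s / sumPrefix νh s * (ν (s.take j) / νs (s.take j) - 1)
          - (ν (s.take j) - νs (s.take j)))) = 0 := by
    have hgroup := sum_take_group L (fun t s => P s *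
      (νh t * V s / sumPrefix νh s * (ν t / νs t - 1) - (ν t - νs t)))
    calc (∑ s ∈ 𝕊, P s * ∑ j ∈ Finset.Icc 1 s.length,
          (νh (s.take j) * V s / sumPrefix νh s * (ν (s.take j) / νs (s.take j) - 1)
            - (ν (s.take j) - νs (s.take j))))
        = ∑ s ∈ 𝕊, ∑ j ∈ Finset.Icc 1 s.length, P s *
          (νh (s.take j) * V s / sumPrefix νh s * (ν (s.take j) / νs (s.take j) - 1)
            - (ν (s.take j) - νs (s.take j))) := by
          exact Finset.sum_congr rfl fun s _ => Finset.mul_sum _ _ _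
      _ = ∑ t ∈ 𝕊, ∑ s ∈ 𝕊.filter (fun s => t <+: s), P s *
          (νh t * V s / sumPrefix νh s * (ν t / νs t - 1) - (ν t - νs t)) := hgroup
      _ = 0 := by
          apply Finset.sum_eq_zero
          intro t ht
          have hmuS : ∑ s ∈ 𝕊.filter (fun s => t <+: s), P s * (νh t * V s / sumPrefix νh s)
              = νs t * ∑ s ∈ 𝕊.filter (fun s => t <+: s), P s := by
            rw [hνseq t ht]
            exact Finset.sum_congr rfl fun s hs => by rw [hmu t ht s hs]
          have step : ∑ s ∈ 𝕊.filter (fun s => t <+: s), P s *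
              (νh t * V s / sumPrefix νh s * (ν t / νs t - 1) - (ν t - νs t))
              = (ν t / νs t - 1) * (∑ s ∈ 𝕊.filter (fun s => t <+: s),
                  P s * (νh t * V s / sumPrefix νh s))
                - (ν t - νs t) * ∑ s ∈ 𝕊.filter (fun s => t <+: s), P s := by
            rw [Finset.mul_sum, Finset.mul_sum, ← Finset.sum_sub_distrib]
            exact Finset.sum_congr rfl fun s _ => by ring
          rw [step, hmuS]
          have hne := (hνspos t ht).ne'
          field_simp
          ring
  linarith [key, hE]


end CoreAttr
end

section
/- Let P be a probability on 𝕊 and let V : 𝕊 → ℝ satisfy V(s) ≥ 0 for every s ∈ 𝕊. Then for all positive valuations ν, ν̂ : 𝕊 → (0, ∞): (i) g(ν | ν̂) ≤ f(ν) (the surrogate g(· | ν̂) minorizes f), and (ii) g(ν | ν) = f(ν) (the surrogate is tangent to f at ν̂ = ν). -/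
open Finset

namespace CoreAttr

variable (A : Type) [Fintype A] [DecidableEq A]

variable {A}

/-- **The surrogate `g(· | ν̂)` minorizes `f` and is tangent at `ν̂ = ν`.** -/
theorem surrogate_minorizes_and_tangent
    {A : Type} [Fintype A] [DecidableEq A] [Nonempty A] (L : ℕ) (hL : 1 ≤ L)
    (P : List A → ℝ) (hP : IsProb (scenarios A L) P)
    (V : List A → ℝ) (hVnonneg : ∀ s ∈ scenarios A L, 0 ≤ V s) :
    ∀ ν νh : List A → ℝ,
      (∀ s ∈ scenarios A L, 0 < ν s) → (∀ s ∈ scenarios A L, 0 < νh s) →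
      gSurr (scenarios A L) P V ν νh ≤ fObj (scenarios A L) P V ν ∧
        gSurr (scenarios A L) P V ν ν = fObj (scenarios A L) P V ν := by
  obtain ⟨hPnn, -⟩ := hP
  intro ν νh hν hνh
  -- prefixes of scenarios are scenarios
  have hpre : ∀ s ∈ scenarios A L, ∀ j ∈ Finset.Icc 1 s.length,
      s.take j ∈ scenarios A L := by
    intro s hs j hj
    rw [mem_scenarios] at hs ⊢
    simp only [Finset.mem_Icc] at hj
    have hlen : 1 ≤ s.length := List.length_pos_iff.mpr hs.1
    constructor
    · intro h
      have := congrArg List.length h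
      simp only [List.length_take, List.length_nil] at this
      omega
    · simp only [List.length_take]
      omega
  -- key per-scenario facts
  have key : ∀ s ∈ scenarios A L,
      (∑ j ∈ Finset.Icc 1 s.length,
        (νh (s.take j) * V s / sumPrefix νh s *
          Real.log (ν (s.take j) / νh (s.take j) * sumPrefix νh s) - ν (s.take j)))
      ≤ V s * Real.log (sumPrefix ν s) - sumPrefix ν s := by
    intro s hs
    have hlen : 1 ≤ s.length := List.length_pos_iff.mpr ((mem_scenarios A L s).mp hs).1
    have hne : (Finset.Icc 1 s.length).Nonempty := ⟨1, by simp [Finset.mem_Icc, hlen]⟩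
    have hS : 0 < sumPrefix ν s :=
      Finset.sum_pos (fun j hj => hν _ (hpre s hs j hj)) hne
    have hSh : 0 < sumPrefix νh s :=
      Finset.sum_pos (fun j hj => hνh _ (hpre s hs j hj)) hne
    have hV : 0 ≤ V s := hVnonneg s hs
    rw [Finset.sum_sub_distrib]
    have hSdef : (∑ j ∈ Finset.Icc 1 s.length, ν (s.take j)) = sumPrefix ν s := rfl
    rw [hSdef]
    have hmain : (∑ j ∈ Finset.Icc 1 s.length,
        νh (s.take j) * V s / sumPrefix νh s *
          Real.log (ν (s.take j) / νh (s.take j) * sumPrefix νh s))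
        ≤ V s * Real.log (sumPrefix ν s) := by
      calc (∑ j ∈ Finset.Icc 1 s.length,
            νh (s.take j) * V s / sumPrefix νh s *
              Real.log (ν (s.take j) / νh (s.take j) * sumPrefix νh s))
          ≤ ∑ j ∈ Finset.Icc 1 s.length,
            νh (s.take j) * V s / sumPrefix νh s *
              ((ν (s.take j) / νh (s.take j) * sumPrefix νh s) / sumPrefix ν s - 1
                + Real.log (sumPrefix ν s)) := by
            refine Finset.sum_le_sum fun j hj => ?_
            have hhj : 0 < νh (s.take j) := hνh _ (hpre s hs j hj)
            have hvj : 0 < ν (s.take j) := hν _ (hpre s hs j hj)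
            have hx : 0 < ν (s.take j) / νh (s.take j) * sumPrefix νh s :=
              mul_pos (div_pos hvj hhj) hSh
            have hlog : Real.log (ν (s.take j) / νh (s.take j) * sumPrefix νh s)
                ≤ (ν (s.take j) / νh (s.take j) * sumPrefix νh s) / sumPrefix ν s - 1
                  + Real.log (sumPrefix ν s) := by
              have h1 : Real.log ((ν (s.take j) / νh (s.take j) * sumPrefix νh s)
                  / sumPrefix ν s)
                  ≤ (ν (s.take j) / νh (s.take j) * sumPrefix νh s) / sumPrefix ν s - 1 :=
                Real.log_le_sub_one_of_pos (div_pos hx hS)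
              rw [Real.log_div (ne_of_gt hx) (ne_of_gt hS)] at h1
              linarith
            exact mul_le_mul_of_nonneg_left hlog
              (by positivity)
        _ = V s * Real.log (sumPrefix ν s) := by
            have e : ∀ j ∈ Finset.Icc 1 s.length,
                νh (s.take j) * V s / sumPrefix νh s *
                  ((ν (s.take j) / νh (s.take j) * sumPrefix νh s) / sumPrefix ν s - 1
                    + Real.log (sumPrefix ν s))
                = ν (s.take j) * (V s / sumPrefix ν s)
                  - νh (s.take j) * (V s / sumPrefix νh s)
                  + νh (s.take j) * (V s / sumPrefix νh s * Real.log (sumPrefix ν s)) := by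
              intro j hj
              have hhj : νh (s.take j) ≠ 0 := ne_of_gt (hνh _ (hpre s hs j hj))
              field_simp
            rw [Finset.sum_congr rfl e]
            rw [Finset.sum_add_distrib, Finset.sum_sub_distrib,
              ← Finset.sum_mul, ← Finset.sum_mul, ← Finset.sum_mul]
            rw [hSdef]
            have hShdef : (∑ j ∈ Finset.Icc 1 s.length, νh (s.take j)) = sumPrefix νh s := rfl
            rw [hShdef]
            field_simp
            ring

    linarith
  have keyEq : ∀ s ∈ scenarios A L,
      (∑ j ∈ Finset.Icc 1 s.length,
        (ν (s.take j) * V s / sumPrefix ν s *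
          Real.log (ν (s.take j) / ν (s.take j) * sumPrefix ν s) - ν (s.take j)))
      = V s * Real.log (sumPrefix ν s) - sumPrefix ν s := by
    intro s hs
    have hlen : 1 ≤ s.length := List.length_pos_iff.mpr ((mem_scenarios A L s).mp hs).1
    have hne : (Finset.Icc 1 s.length).Nonempty := ⟨1, by simp [Finset.mem_Icc, hlen]⟩
    have hS : 0 < sumPrefix ν s :=
      Finset.sum_pos (fun j hj => hν _ (hpre s hs j hj)) hne
    have hSdef : (∑ j ∈ Finset.Icc 1 s.length, ν (s.take j)) = sumPrefix ν s := rfl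
    have e : ∀ j ∈ Finset.Icc 1 s.length,
        ν (s.take j) * V s / sumPrefix ν s *
          Real.log (ν (s.take j) / ν (s.take j) * sumPrefix ν s) - ν (s.take j)
        = ν (s.take j) * (V s / sumPrefix ν s * Real.log (sumPrefix ν s)) - ν (s.take j) := by
      intro j hj
      have hvj : ν (s.take j) ≠ 0 := ne_of_gt (hν _ (hpre s hs j hj))
      rw [div_self hvj, one_mul]
      ring
    rw [Finset.sum_congr rfl e, Finset.sum_sub_distrib, ← Finset.sum_mul, hSdef]
    field_simp

  constructor
  · exact Finset.sum_le_sum fun s hs =>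
      mul_le_mul_of_nonneg_left (key s hs) (hPnn s hs)
  · exact Finset.sum_congr rfl fun s hs => by rw [keyEq s hs]


end CoreAttr
end
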